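/- arXiv:1305.5963 — 3 statements merged into one kernel-verified Lean document; each statement's English description precedes it below -/
import Mathlib

section
/- Let Q be a probability measure on [0,∞)² absolutely continuous with respect to Lebesgue measure with density f. Define F(K₁, K₂) = Q(X₁ ≤ K₁ and X₂ ≤ K₂) = ∫₀^{K₁} ∫₀^{K₂} f(x₁, x₂) dx₂ dx₁. Then for Lebesgue-a.e. (K₁, K₂) ∈ [0,∞)², the mixed partial derivative ∂²F/∂K₁∂K₂ exists and equals f(K₁, K₂). -/
/-!
Extend `f` by zero to a density `g` on the plane and write `H k y = ∫ x in 0..k, g (x, y)`;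
by Fubini `F k` is the primitive of `H k`.
For each rational `k`, Lebesgue's differentiation theorem gives `∂₂F (k, y) = H k y` for a.e. `y`.
Since `g ≥ 0`, the slopes of `F k` at `y` increase with `k`, and the continuity of `H · y`
squeezes every other `k` between rationals; hence `∂₂F (k, y) = H k y` for all `k` at a.e. `y`.
It remains that `∂₁H = g` a.e. in the plane. Lebesgue's theorem gives this on almost every row,
and Fubini upgrades it to the plane once the set of good points is measurable; testing the
derivative only along rational points makes it so.
-/

open Filter Set Topology MeasureTheory intervalIntegral

theorem hasDerivAt_iff_forall_rat {φ : ℝ → ℝ} {d x : ℝ} (hφ : Continuous φ) :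
    HasDerivAt φ d x ↔ ∀ ε : ℚ, 0 < ε → ∃ δ : ℚ, 0 < δ ∧
      ∀ q : ℚ, |(q : ℝ) - x| < δ → |φ q - φ x - (q - x) * d| ≤ ε * |(q : ℝ) - x| := by
  rw [hasDerivAt_iff_isLittleO, Asymptotics.isLittleO_iff]
  constructor
  · intro h ε hε
    obtain ⟨δ, hδ, hball⟩ := Metric.eventually_nhds_iff.1 (h (Rat.cast_pos.2 hε))
    obtain ⟨δ', hδ', hδ'δ⟩ := exists_rat_btwn hδ
    refine ⟨δ', Rat.cast_pos.1 hδ', fun q hq => ?_⟩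
    simpa only [smul_eq_mul, Real.norm_eq_abs] using hball (hq.trans hδ'δ)
  · intro h c hc
    obtain ⟨ε, hε, hεc⟩ := exists_rat_btwn hc
    obtain ⟨δ, hδ, hq⟩ := h ε (Rat.cast_pos.1 hε)
    have hclosed : IsClosed {y | |φ y - φ x - (y - x) * d| ≤ ε * |y - x|} :=
      isClosed_le (by fun_prop) (by fun_prop)
    have hball : Metric.ball x δ ⊆ {y | |φ y - φ x - (y - x) * d| ≤ ε * |y - x|} :=
      (Rat.denseRange_cast.open_subset_closure_inter Metric.isOpen_ball).trans <|
        closure_minimal (by rintro _ ⟨hy, q, rfl⟩; exact hq q hy) hclosed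
    filter_upwards [Metric.ball_mem_nhds x (Rat.cast_pos.2 hδ)] with y hy
    simpa only [smul_eq_mul, Real.norm_eq_abs] using
      (hball hy).trans (mul_le_mul_of_nonneg_right hεc.le (abs_nonneg _))

theorem hasDerivAt_of_monotone_sub {Φ : ℝ → ℝ → ℝ} {φ' : ℝ → ℝ} {k x : ℝ}
    (hmono : ∀ k k', k ≤ k' → Monotone fun y => Φ k' y - Φ k y)
    (hderiv : ∀ q : ℚ, HasDerivAt (Φ q) (φ' q) x) (hcont : ContinuousAt φ' k) :
    HasDerivAt (Φ k) (φ' k) x := by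
  have hslope : ∀ k k', k ≤ k' → ∀ y, slope (Φ k) x y ≤ slope (Φ k') x y := by
    intro k k' hk y
    have hsub : slope (Φ k') x y - slope (Φ k) x y = slope (fun y => Φ k' y - Φ k y) x y := by
      simp only [slope_def_field]; ring
    linarith [((hmono k k' hk).monotoneOn univ).slope_nonneg (mem_univ x) (mem_univ y)]
  have hslope_q : ∀ q : ℚ, Tendsto (slope (Φ q) x) (𝓝[≠] x) (𝓝 (φ' q)) :=
    fun q => hasDerivAt_iff_tendsto_slope.1 (hderiv q)
  rw [hasDerivAt_iff_tendsto_slope, tendsto_order]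
  constructor
  · intro a ha
    obtain ⟨l, u, ⟨hl, hu⟩, hsub⟩ :=
      mem_nhds_iff_exists_Ioo_subset.1 (hcont.eventually (lt_mem_nhds ha))
    obtain ⟨q, hlq, hqk⟩ := exists_rat_btwn hl
    filter_upwards [(tendsto_order.1 (hslope_q q)).1 a (hsub ⟨hlq, hqk.trans hu⟩)] with y hy
    exact hy.trans_le (hslope q k hqk.le y)
  · intro b hb
    obtain ⟨l, u, ⟨hl, hu⟩, hsub⟩ :=
      mem_nhds_iff_exists_Ioo_subset.1 (hcont.eventually (gt_mem_nhds hb))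
    obtain ⟨q, hkq, hqu⟩ := exists_rat_btwn hu
    filter_upwards [(tendsto_order.1 (hslope_q q)).2 b (hsub ⟨hl.trans hkq, hqu⟩)] with y hy
    exact (hslope k q hkq.le y).trans_lt hy

theorem differentiableAt_and_hasDerivAt_deriv_congr {F G : ℝ → ℝ → ℝ} {K : ℝ × ℝ} {c : ℝ}
    (hFG : ∀ᶠ p in 𝓝 K, F p.1 p.2 = G p.1 p.2)
    (hG : DifferentiableAt ℝ (G K.1) K.2 ∧ HasDerivAt (fun k₁ => deriv (G k₁) K.2) c K.1) :
    DifferentiableAt ℝ (F K.1) K.2 ∧ HasDerivAt (fun k₁ => deriv (F k₁) K.2) c K.1 := by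
  obtain ⟨a, b⟩ := K
  rw [nhds_prod_eq] at hFG
  have hFG' := hFG.curry
  exact ⟨hG.1.congr_of_eventuallyEq hFG'.self_of_nhds,
    hG.2.congr_of_eventuallyEq (hFG'.mono fun k₁ hk₁ => EventuallyEq.deriv_eq (f := G k₁) hk₁)⟩

section PlanarDensity

variable {g : ℝ × ℝ → ℝ}

theorem measurable_primitive_fst (hg : Measurable g) :
    Measurable fun p : ℝ × ℝ => ∫ x in 0..p.1, g (x, p.2) := by
  have hIoc : ∀ (a b : ℝ × ℝ → ℝ), Measurable a → Measurable b →
      Measurable fun p : ℝ × ℝ => ∫ x in Ioc (a p) (b p), g (x, p.2) := by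
    intro a b ha hb
    have hset : MeasurableSet {q : (ℝ × ℝ) × ℝ | q.2 ∈ Ioc (a q.1) (b q.1)} :=
      (measurableSet_lt (ha.comp measurable_fst) measurable_snd).inter
        (measurableSet_le measurable_snd (hb.comp measurable_fst))
    have hmeas : StronglyMeasurable fun q : (ℝ × ℝ) × ℝ =>
        (Ioc (a q.1) (b q.1)).indicator (fun x => g (x, q.1.2)) q.2 := by
      refine Measurable.stronglyMeasurable ?_
      simp only [indicator_apply]
      exact Measurable.ite hset (by fun_prop) measurable_const
    simpa only [MeasureTheory.integral_indicator measurableSet_Ioc] using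
      hmeas.integral_prod_right'.measurable
  exact (hIoc (fun _ => 0) Prod.fst measurable_const measurable_fst).sub
    (hIoc Prod.fst (fun _ => 0) measurable_fst measurable_const)

theorem integrable_primitive_fst (hg : Integrable g) (a b : ℝ) :
    Integrable fun y => ∫ x in a..b, g (x, y) := by
  have hrestrict : Integrable g ((volume.restrict (uIoc a b)).prod volume) := by
    have := hg.integrableOn (s := uIoc a b ×ˢ univ)
    rwa [IntegrableOn, Measure.volume_eq_prod, ← Measure.prod_restrict,
      Measure.restrict_univ] at this
  simp_rw [intervalIntegral_eq_integral_uIoc]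
  exact hrestrict.integral_prod_right.smul (if a ≤ b then (1 : ℝ) else -1)

theorem ae_hasDerivAt_primitive_fst (hg : Integrable g) (hgm : Measurable g) :
    ∀ᵐ K : ℝ × ℝ, HasDerivAt (fun k => ∫ x in 0..k, g (x, K.2)) (g K) K.1 := by
  let S : Set (ℝ × ℝ) := {K | Integrable (fun x => g (x, K.2)) ∧
    ∀ ε : ℚ, 0 < ε → ∃ δ : ℚ, 0 < δ ∧ ∀ q : ℚ, |(q : ℝ) - K.1| < δ →
      |(∫ x in 0..(q : ℝ), g (x, K.2)) - (∫ x in 0..K.1, g (x, K.2)) - (q - K.1) * g K|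
        ≤ ε * |(q : ℝ) - K.1|}
  have hS : MeasurableSet S := by
    have hH := measurable_primitive_fst hgm
    refine (measurableSet_integrable (f := fun (K : ℝ × ℝ) x => g (x, K.2)) ?_).inter ?_
    · exact Measurable.stronglyMeasurable (by fun_prop)
    · have hHq : ∀ q : ℝ, Measurable fun K : ℝ × ℝ => ∫ x in 0..q, g (x, K.2) :=
        fun q => hH.comp (measurable_const.prodMk measurable_snd)
      exact measurableSet_setOfPred.2 (by fun_prop)
  have hsections : ∀ᵐ y, ∀ᵐ x, (x, y) ∈ S := by
    filter_upwards [hg.prod_left_ae] with y hrow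
    filter_upwards [_root_.LocallyIntegrable.ae_hasDerivAt_integral hrow.locallyIntegrable]
      with x hx
    exact ⟨hrow, (hasDerivAt_iff_forall_rat
      (continuous_primitive (fun _ _ => hrow.intervalIntegrable) 0)).1 (hx 0)⟩
  have hS_full : ∀ᵐ K : ℝ × ℝ, K ∈ S := by
    rw [Measure.volume_eq_prod, Measure.ae_prod_mem_iff_ae_ae_mem hS]
    exact (Measure.ae_ae_comm (p := fun x y => (x, y) ∈ S) hS).2 hsections
  filter_upwards [hS_full] with K ⟨hrow, hK⟩
  exact (hasDerivAt_iff_forall_rat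
    (continuous_primitive (fun _ _ => hrow.intervalIntegrable) 0)).2 hK

theorem intervalIntegral_intervalIntegral_swap_of_integrable (hg : Integrable g) (a b c d : ℝ) :
    ∫ x₁ in a..b, ∫ x₂ in c..d, g (x₁, x₂) = ∫ x₂ in c..d, ∫ x₁ in a..b, g (x₁, x₂) :=
  intervalIntegral_intervalIntegral_swap (F := fun x₁ x₂ => g (x₁, x₂)) hg.integrableOn

theorem monotone_sub_primitive (hg : Integrable g) (hg0 : 0 ≤ g) {k k' : ℝ} (hk : k ≤ k') :
    Monotone fun y => (∫ x₁ in 0..k', ∫ x₂ in 0..y, g (x₁, x₂)) -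
      ∫ x₁ in 0..k, ∫ x₂ in 0..y, g (x₁, x₂) := by
  have hH : ∀ k a b, IntervalIntegrable (fun y => ∫ x in 0..k, g (x, y)) volume a b :=
    fun k _ _ => (integrable_primitive_fst hg 0 k).intervalIntegrable
  have hgap : 0 ≤ᵐ[volume] fun y => (∫ x in 0..k', g (x, y)) - ∫ x in 0..k, g (x, y) := by
    filter_upwards [hg.prod_left_ae] with y hrow
    rw [integral_interval_sub_left hrow.intervalIntegrable hrow.intervalIntegrable]
    exact integral_nonneg hk fun x _ => hg0 (x, y)
  intro y y' hy
  simp only [intervalIntegral_intervalIntegral_swap_of_integrable hg 0 _ 0,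
    ← integral_sub (hH k' _ _) (hH k _ _)]
  rw [← sub_nonneg, integral_interval_sub_left ((hH k' _ _).sub (hH k _ _))
    ((hH k' _ _).sub (hH k _ _))]
  exact intervalIntegral.integral_nonneg_of_ae hy hgap

theorem ae_hasDerivAt_primitive_snd (hg : Integrable g) (hg0 : 0 ≤ g) :
    ∀ᵐ y : ℝ, ∀ k, HasDerivAt (fun k₂ => ∫ x₁ in 0..k, ∫ x₂ in 0..k₂, g (x₁, x₂))
      (∫ x in 0..k, g (x, y)) y := by
  have hrat : ∀ᵐ y : ℝ, ∀ q : ℚ,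
      HasDerivAt (fun k₂ => ∫ x₁ in 0..(q : ℝ), ∫ x₂ in 0..k₂, g (x₁, x₂))
        (∫ x in 0..(q : ℝ), g (x, y)) y := by
    rw [ae_all_iff]
    intro q
    filter_upwards [_root_.LocallyIntegrable.ae_hasDerivAt_integral
      (integrable_primitive_fst hg 0 q).locallyIntegrable] with y hy
    simpa only [intervalIntegral_intervalIntegral_swap_of_integrable hg] using hy 0
  filter_upwards [hrat, hg.prod_left_ae] with y hy hrow k
  exact hasDerivAt_of_monotone_sub (fun k k' hk => monotone_sub_primitive hg hg0 hk) hy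
    (continuous_primitive (fun _ _ => hrow.intervalIntegrable) 0).continuousAt

theorem ae_hasDerivAt_deriv_primitive (hg : Integrable g) (hgm : Measurable g) (hg0 : 0 ≤ g) :
    ∀ᵐ K : ℝ × ℝ,
      DifferentiableAt ℝ (fun k₂ => ∫ x₁ in 0..K.1, ∫ x₂ in 0..k₂, g (x₁, x₂)) K.2 ∧
      HasDerivAt (fun k₁ => deriv (fun k₂ => ∫ x₁ in 0..k₁, ∫ x₂ in 0..k₂, g (x₁, x₂)) K.2)
        (g K) K.1 := by
  filter_upwards [Measure.quasiMeasurePreserving_snd.ae (ae_hasDerivAt_primitive_snd hg hg0),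
    ae_hasDerivAt_primitive_fst hg hgm] with K hsnd hfst
  refine ⟨(hsnd K.1).differentiableAt, ?_⟩
  simpa only [(hsnd _).deriv] using hfst

end PlanarDensity

theorem stmt5_general (f : ℝ × ℝ → ℝ) (hmeas : Measurable f) (hnn : ∀ x, 0 ≤ f x)
    (hint : IntegrableOn f (Set.Ici 0 ×ˢ Set.Ici 0))
    (F : ℝ → ℝ → ℝ)
    (hF : ∀ K₁ K₂, F K₁ K₂ = ∫ x₁ in (0:ℝ)..K₁, ∫ x₂ in (0:ℝ)..K₂, f (x₁, x₂)) :
    ∀ᵐ K : ℝ × ℝ, (0 ≤ K.1 ∧ 0 ≤ K.2) →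
      (DifferentiableAt ℝ (fun k₂ => F K.1 k₂) K.2 ∧
       HasDerivAt (fun k₁ => deriv (fun k₂ => F k₁ k₂) K.2) (f K) K.1) := by
  have hquad : MeasurableSet (Ici (0 : ℝ) ×ˢ Ici (0 : ℝ)) :=
    measurableSet_Ici.prod measurableSet_Ici
  set g := (Ici (0 : ℝ) ×ˢ Ici (0 : ℝ)).indicator f
  have hFg : ∀ k₁ k₂ : ℝ, 0 ≤ k₁ → 0 ≤ k₂ →
      F k₁ k₂ = ∫ x₁ in 0..k₁, ∫ x₂ in 0..k₂, g (x₁, x₂) := by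
    intro k₁ k₂ h₁ h₂
    rw [hF]
    refine integral_congr fun x₁ hx₁ => integral_congr fun x₂ hx₂ => ?_
    rw [uIcc_of_le h₁] at hx₁
    rw [uIcc_of_le h₂] at hx₂
    exact (indicator_of_mem (mk_mem_prod hx₁.1 hx₂.1) f).symm
  filter_upwards [ae_hasDerivAt_deriv_primitive ((integrable_indicator_iff hquad).2 hint)
    (hmeas.indicator hquad) (indicator_nonneg fun x _ => hnn x),
    Measure.quasiMeasurePreserving_fst.ae (volume.ae_ne 0),
    Measure.quasiMeasurePreserving_snd.ae (volume.ae_ne 0)] with K hK hK₁ hK₂ hK₀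
  have hpos : K ∈ Ioi (0 : ℝ) ×ˢ Ioi (0 : ℝ) := ⟨hK₀.1.lt_of_ne' hK₁, hK₀.2.lt_of_ne' hK₂⟩
  rw [← indicator_of_mem (prod_mono Ioi_subset_Ici_self Ioi_subset_Ici_self hpos) f]
  refine differentiableAt_and_hasDerivAt_deriv_congr
    (F := F) (G := fun k₁ k₂ => ∫ x₁ in 0..k₁, ∫ x₂ in 0..k₂, g (x₁, x₂)) ?_ hK
  filter_upwards [(isOpen_Ioi.prod isOpen_Ioi).mem_nhds hpos] with p hp
  exact hFg p.1 p.2 (le_of_lt hp.1) (le_of_lt hp.2)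

/-- If Q ≪ Lebesgue on [0,∞)² has density f and
F(K₁,K₂) = ∫₀^{K₁} ∫₀^{K₂} f(x₁,x₂) dx₂ dx₁ is the joint CDF, then for
Lebesgue-a.e. (K₁,K₂) ∈ [0,∞)² the iterated mixed partial derivative
∂²F/∂K₁∂K₂ (first in K₂, then in K₁) exists and equals f(K₁,K₂). -/
theorem stmt5 (f : ℝ × ℝ → ℝ) (hmeas : Measurable f) (hnn : ∀ x, 0 ≤ f x)
    (hint : IntegrableOn f (Set.Ici 0 ×ˢ Set.Ici 0))
    (hprob : ∫ x in Set.Ici (0:ℝ) ×ˢ Set.Ici (0:ℝ), f x = 1)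
    (F : ℝ → ℝ → ℝ)
    (hF : ∀ K₁ K₂, F K₁ K₂ = ∫ x₁ in (0:ℝ)..K₁, ∫ x₂ in (0:ℝ)..K₂, f (x₁, x₂)) :
    ∀ᵐ K : ℝ × ℝ, (0 ≤ K.1 ∧ 0 ≤ K.2) →
      (DifferentiableAt ℝ (fun k₂ => F K.1 k₂) K.2 ∧
       HasDerivAt (fun k₁ => deriv (fun k₂ => F k₁ k₂) K.2) (f K) K.1) :=
  stmt5_general f hmeas hnn hint F hF
end

section
/- Let X be an integrable random vector in ℝ₊ⁿ whose law Q charges no hyperplane {xᵢ = c}. Then for every K̄ ∈ ℝ₊ⁿ, the directional derivative of V^∞(K̄, 0) = E[maxᵢ (Xᵢ − Kᵢ)⁺] in direction 𝟙 = (1,…,1) exists and equals Q(Xᵢ ≤ Kᵢ for all i) − 1. -/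
open Filter Set Topology MeasureTheory

/-!
For fixed `x`, the map `t ↦ maxᵢ (xᵢ - Kᵢ - t)⁺` is 1-Lipschitz. If no `xᵢ` equals `Kᵢ`, it is
locally `0` near `t = 0` when all `xᵢ < Kᵢ`, and locally `maxᵢ (xᵢ - Kᵢ) - t` otherwise, so its
derivative at `0` is `1_{x ≤ K} - 1`. Because `Q` charges no hyperplane `{xᵢ = Kᵢ}`, this holds
`Q`-a.e., and differentiation under the integral sign, dominated by the Lipschitz constant `1`,
gives the derivative `Q(X ≤ K) - 1`.
-/

section BestOfCalls

variable {ι : Type*}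

/-- The paper's payoff `h_∞(x, K, 0)`. -/
noncomputable def bestOfCalls (x K : ι → ℝ) : ℝ := ⨆ i, max (x i - K i) 0

lemma bestOfCalls_nonneg (x K : ι → ℝ) : 0 ≤ bestOfCalls x K :=
  Real.iSup_nonneg fun _ ↦ le_max_right _ _

lemma bestOfCalls_eq_zero {x K : ι → ℝ} (h : ∀ i, x i ≤ K i) : bestOfCalls x K = 0 :=
  le_antisymm (Real.iSup_le (fun i ↦ by simp [h i]) le_rfl) (bestOfCalls_nonneg x K)

section Fintype

variable [Fintype ι]

lemma max_sub_le_bestOfCalls (x K : ι → ℝ) (i : ι) : max (x i - K i) 0 ≤ bestOfCalls x K :=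
  le_ciSup (f := fun i ↦ max (x i - K i) 0) (Set.finite_range _).bddAbove i

lemma bestOfCalls_le_add_of_le {x x' K K' : ι → ℝ} {c : ℝ} (hc : 0 ≤ c)
    (h : ∀ i, x i - K i ≤ x' i - K' i + c) : bestOfCalls x K ≤ bestOfCalls x' K' + c :=
  Real.iSup_le (fun i ↦ max_le
      (by linarith [h i, le_max_left (x' i - K' i) 0, max_sub_le_bestOfCalls x' K' i])
      (by linarith [bestOfCalls_nonneg x' K']))
    (by linarith [bestOfCalls_nonneg x' K'])

lemma lipschitzWith_bestOfCalls (K : ι → ℝ) : LipschitzWith 1 fun x ↦ bestOfCalls x K :=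
  LipschitzWith.of_le_add fun x y ↦ bestOfCalls_le_add_of_le dist_nonneg fun i ↦ by
    linarith [le_abs_self (x i - y i), Real.dist_eq (x i) (y i), dist_le_pi_dist x y i]

lemma lipschitzWith_bestOfCalls_add (x K : ι → ℝ) :
    LipschitzWith 1 fun t ↦ bestOfCalls x (fun i ↦ K i + t) :=
  LipschitzWith.of_le_add fun s t ↦ bestOfCalls_le_add_of_le dist_nonneg fun i ↦ by
    linarith [neg_abs_le (s - t), Real.dist_eq s t]

lemma bestOfCalls_eq_sub {x K : ι → ℝ} {j : ι} (hj : ∀ i, x i - K i ≤ x j - K j)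
    (hpos : 0 ≤ x j - K j) : bestOfCalls x K = x j - K j :=
  le_antisymm (Real.iSup_le (fun i ↦ max_le (hj i) hpos) hpos)
    ((le_max_left _ _).trans (max_sub_le_bestOfCalls x K j))

lemma hasDerivAt_bestOfCalls_add_of_forall_lt {x K : ι → ℝ} (h : ∀ i, x i < K i) :
    HasDerivAt (fun t ↦ bestOfCalls x (fun i ↦ K i + t)) 0 0 := by
  have hK : ∀ᶠ t in 𝓝 (0 : ℝ), ∀ i, x i ≤ K i + t :=
    eventually_all.2 fun i ↦ (eventually_gt_nhds (sub_neg.2 (h i))).mono fun t ht ↦ by linarith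
  exact (hasDerivAt_const 0 0).congr_of_eventuallyEq (hK.mono fun t ht ↦ bestOfCalls_eq_zero ht)

lemma hasDerivAt_bestOfCalls_add_of_exists_lt {x K : ι → ℝ} (h : ∃ i, K i < x i) :
    HasDerivAt (fun t ↦ bestOfCalls x (fun i ↦ K i + t)) (-1) 0 := by
  obtain ⟨i₀, hi₀⟩ := h
  have : Nonempty ι := ⟨i₀⟩
  obtain ⟨j, hj⟩ := Finite.exists_max fun i ↦ x i - K i
  have hpos : 0 < x j - K j := by linarith [hj i₀]
  have hK : ∀ᶠ t in 𝓝 (0 : ℝ), bestOfCalls x (fun i ↦ K i + t) = x j - K j - t :=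
    (eventually_lt_nhds hpos).mono fun t ht ↦ by
      rw [bestOfCalls_eq_sub (j := j) (fun i ↦ by linarith [hj i]) (by linarith)]
      ring
  exact ((hasDerivAt_id (0 : ℝ)).const_sub (x j - K j)).congr_of_eventuallyEq hK

lemma hasDerivAt_bestOfCalls_add {x K : ι → ℝ} (h : ∀ i, x i ≠ K i) :
    HasDerivAt (fun t ↦ bestOfCalls x (fun i ↦ K i + t))
      ({y | ∀ i, y i ≤ K i}.indicator 1 x - 1) 0 := by
  by_cases hx : ∀ i, x i ≤ K i
  · rw [indicator_of_mem (show x ∈ {y | ∀ i, y i ≤ K i} from hx), Pi.one_apply, sub_self]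
    exact hasDerivAt_bestOfCalls_add_of_forall_lt fun i ↦ (hx i).lt_of_ne (h i)
  · rw [indicator_of_notMem (show x ∉ {y | ∀ i, y i ≤ K i} from hx), zero_sub]
    simp only [not_forall, not_le] at hx
    exact hasDerivAt_bestOfCalls_add_of_exists_lt hx

lemma integrable_bestOfCalls {μ : Measure (ι → ℝ)} [IsFiniteMeasure μ]
    (hnonneg : ∀ᵐ x ∂μ, ∀ i, 0 ≤ x i) (hint : Integrable (fun x ↦ ∑ i, x i) μ) (K : ι → ℝ) :
    Integrable (fun x ↦ bestOfCalls x K) μ := by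
  refine (hint.add (integrable_const (∑ i, |K i|))).mono'
    (lipschitzWith_bestOfCalls K).continuous.aestronglyMeasurable ?_
  filter_upwards [hnonneg] with x hx
  rw [Real.norm_of_nonneg (bestOfCalls_nonneg x K), Pi.add_apply, ← Finset.sum_add_distrib]
  have hterm : ∀ j, 0 ≤ x j + |K j| := fun j ↦ add_nonneg (hx j) (abs_nonneg _)
  refine Real.iSup_le (fun i ↦ ?_) (Finset.sum_nonneg fun j _ ↦ hterm j)
  calc max (x i - K i) 0 ≤ x i + |K i| := max_le (by linarith [neg_abs_le (K i)]) (hterm i)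
    _ ≤ ∑ j, (x j + |K j|) := Finset.single_le_sum (fun j _ ↦ hterm j) (Finset.mem_univ i)

end Fintype

end BestOfCalls

theorem stmt15_general {n : ℕ} (Q : Measure (Fin n → ℝ)) [IsProbabilityMeasure Q]
    (hsupp : ∀ᵐ x ∂Q, ∀ i, 0 ≤ x i)
    (hint : Integrable (fun x : Fin n → ℝ => ∑ i, x i) Q)
    (hatomless : ∀ (i : Fin n) (c : ℝ), Q {x | x i = c} = 0)
    (Kb : Fin n → ℝ) :
    Tendsto (fun t : ℝ =>
        ((∫ x, ⨆ i, max (x i - (Kb i + t)) 0 ∂Q)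
          - ∫ x, ⨆ i, max (x i - Kb i) 0 ∂Q) / t)
      (nhdsWithin 0 {(0:ℝ)}ᶜ)
      (nhds ((Q {x | ∀ i, x i ≤ Kb i}).toReal - 1)) := by
  set S := {x : Fin n → ℝ | ∀ i, x i ≤ Kb i}
  have hS : MeasurableSet S := by
    simp only [S, ofPred_forall]
    exact MeasurableSet.iInter fun i ↦ measurableSet_le (measurable_pi_apply i) measurable_const
  have hoff : ∀ᵐ x ∂Q, ∀ i, x i ≠ Kb i :=
    ae_all_iff.2 fun i ↦ by simpa [ae_iff] using hatomless i (Kb i)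
  obtain ⟨-, hderiv⟩ := hasDerivAt_integral_of_dominated_loc_of_lip
    (F := fun t x ↦ bestOfCalls x (fun i ↦ Kb i + t)) (F' := fun x ↦ S.indicator 1 x - 1)
    (bound := fun _ ↦ 1) univ_mem
    (Eventually.of_forall fun t ↦
      (lipschitzWith_bestOfCalls _).continuous.aestronglyMeasurable)
    (integrable_bestOfCalls hsupp hint _)
    ((measurable_const.indicator hS).sub measurable_const).aestronglyMeasurable
    (ae_of_all _ fun x ↦ by simpa using lipschitzWith_bestOfCalls_add x Kb)
    (integrable_const 1) (hoff.mono fun x hx ↦ hasDerivAt_bestOfCalls_add hx)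
  have hlim : ∫ x, S.indicator 1 x - 1 ∂Q = (Q S).toReal - 1 := by
    rw [integral_sub ((integrable_const 1).indicator hS) (integrable_const 1),
      integral_indicator_one hS]
    simp [measureReal_def]
  rw [hlim] at hderiv
  refine hderiv.tendsto_slope_zero.congr fun t ↦ ?_
  simp [bestOfCalls, div_eq_inv_mul]

/-- If the law Q of an integrable random vector X in ℝ₊ⁿ charges
no hyperplane {xᵢ = c}, then for every K̄ ∈ ℝ₊ⁿ the directional derivative of
V^∞(K̄,0) = E[maxᵢ (Xᵢ-Kᵢ)⁺] in the direction 𝟙 = (1,…,1) exists and equals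
Q(∀ i, Xᵢ ≤ Kᵢ) − 1. -/
theorem stmt15 {n : ℕ} (hn : 0 < n) (Q : Measure (Fin n → ℝ)) [IsProbabilityMeasure Q]
    (hsupp : ∀ᵐ x ∂Q, ∀ i, 0 ≤ x i)
    (hint : Integrable (fun x : Fin n → ℝ => ∑ i, x i) Q)
    (hatomless : ∀ (i : Fin n) (c : ℝ), Q {x | x i = c} = 0)
    (Kb : Fin n → ℝ) (hKb : ∀ i, 0 ≤ Kb i) :
    Tendsto (fun t : ℝ =>
        ((∫ x, ⨆ i, max (x i - (Kb i + t)) 0 ∂Q)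
          - ∫ x, ⨆ i, max (x i - Kb i) 0 ∂Q) / t)
      (nhdsWithin 0 {(0:ℝ)}ᶜ)
      (nhds ((Q {x | ∀ i, x i ≤ Kb i}).toReal - 1)) :=
  stmt15_general Q hsupp hint hatomless Kb
end

section
/- Let X = (X₁, X₂) be an integrable random vector in ℝ₊² with law Q ≪ Lebesgue measure m on [0,∞)², with density f. Define V^∞(K₁, K₂) = E[max((X₁ − K₁)⁺, (X₂ − K₂)⁺)]. Then for m-a.e. (K₁, K₂): ∂²/∂K₁∂K₂ [D_𝟙 V^∞(K₁, K₂)] = f(K₁, K₂), where D_𝟙 denotes the directional derivative in the direction (1,1). -/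
/-!
Write `F(k₁, k₂) = Q(X₁ ≤ k₁, X₂ ≤ k₂)`. Shifting both strikes by `t` shifts
`max(X₁ - K₁, X₂ - K₂)` by `-t`, so `D_𝟙 V^∞ = F - 1` everywhere. By Fubini,
`F(k₁, ·)` is the primitive of `y ↦ ∫_{x ≤ k₁} f(x, y) dx`, so the Lebesgue differentiation
theorem gives `∂₂F(q, K₂) = ∫_{x ≤ q} f(x, K₂) dx` for a.e. `K₂`, simultaneously for all
rational `q`. Since `F(k', ·) - F(k, ·)` is nondecreasing for `k ≤ k'` and
`k ↦ ∫_{x ≤ k} f(x, K₂) dx` is continuous, the slopes of `F(k₁, ·)` are squeezed between those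
at rationals, which extends this to all `k₁`. A second application of Lebesgue differentiation,
now in `x`, yields `f`.
-/

open Filter Set Topology MeasureTheory

lemma tendsto_div_nhdsGT_zero_of_monotone {D : ℝ → ℝ} {d : ℝ} (hD : Monotone D) (hD0 : D 0 = 0)
    (h : Tendsto (fun n : ℕ => n * D (n : ℝ)⁻¹) atTop (𝓝 d)) :
    Tendsto (fun t => D t / t) (𝓝[>] 0) (𝓝 d) := by
  have hlow : Tendsto (fun n : ℕ => ((n : ℝ) + 1) * D ((n : ℝ) + 1)⁻¹ * (n / (n + 1)))
      atTop (𝓝 d) := by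
    simpa using ((tendsto_add_atTop_iff_nat 1).2 h).mul (tendsto_natCast_div_add_atTop (1 : ℝ))
  have hup : Tendsto (fun n : ℕ => n * D (n : ℝ)⁻¹ * (1 + (n : ℝ)⁻¹)) atTop (𝓝 d) := by
    simpa using h.mul ((tendsto_const_nhds (x := (1 : ℝ))).add tendsto_inv_atTop_nhds_zero_nat)
  have hfloor : Tendsto (fun t : ℝ => ⌊t⁻¹⌋₊) (𝓝[>] 0) atTop :=
    tendsto_nat_floor_atTop.comp tendsto_inv_nhdsGT_zero
  -- with `m = ⌊t⁻¹⌋₊` we have `(m + 1)⁻¹ < t ≤ m⁻¹`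
  have hbounds : ∀ᶠ t in 𝓝[>] 0,
      ((⌊t⁻¹⌋₊ : ℝ) + 1) * D ((⌊t⁻¹⌋₊ : ℝ) + 1)⁻¹ * (⌊t⁻¹⌋₊ / (⌊t⁻¹⌋₊ + 1)) ≤ D t / t ∧
      D t / t ≤ ⌊t⁻¹⌋₊ * D (⌊t⁻¹⌋₊ : ℝ)⁻¹ * (1 + (⌊t⁻¹⌋₊ : ℝ)⁻¹) := by
    filter_upwards [Ioo_mem_nhdsGT one_pos] with t ⟨ht0, ht1⟩
    have hm1 : 1 ≤ ⌊t⁻¹⌋₊ := Nat.one_le_floor_iff _ |>.2 ((one_lt_inv₀ ht0).2 ht1).le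
    have hmt : (⌊t⁻¹⌋₊ : ℝ) ≤ t⁻¹ := Nat.floor_le (by positivity)
    have htm : t⁻¹ < ⌊t⁻¹⌋₊ + 1 := Nat.lt_floor_add_one _
    generalize ⌊t⁻¹⌋₊ = m at hm1 hmt htm ⊢
    have hm0 : (0 : ℝ) < m := by exact_mod_cast hm1
    have hlow : D ((m : ℝ) + 1)⁻¹ ≤ D t := hD (inv_le_of_inv_le₀ ht0 htm.le)
    have hup : D t ≤ D (m : ℝ)⁻¹ := hD ((le_inv_comm₀ hm0 ht0).1 hmt)
    have hDm1 : 0 ≤ D ((m : ℝ) + 1)⁻¹ := hD0 ▸ hD (by positivity)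
    have hDm : 0 ≤ D (m : ℝ)⁻¹ := hD0 ▸ hD (by positivity)
    constructor
    · calc ((m : ℝ) + 1) * D ((m : ℝ) + 1)⁻¹ * (m / (m + 1)) = D ((m : ℝ) + 1)⁻¹ * m := by
            field_simp
        _ ≤ D t * t⁻¹ := mul_le_mul hlow hmt hm0.le (hDm1.trans hlow)
        _ = D t / t := (div_eq_mul_inv _ _).symm
    · calc D t / t = D t * t⁻¹ := div_eq_mul_inv _ _
        _ ≤ D (m : ℝ)⁻¹ * (m + 1) := mul_le_mul hup htm.le (by positivity) hDm
        _ = m * D (m : ℝ)⁻¹ * (1 + (m : ℝ)⁻¹) := by field_simp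
  exact tendsto_of_tendsto_of_tendsto_of_le_of_le' (hlow.comp hfloor) (hup.comp hfloor)
    (hbounds.mono fun _ => And.left) (hbounds.mono fun _ => And.right)

lemma HasDerivAt.tendsto_nat_mul_sub {Φ : ℝ → ℝ} {x d : ℝ} (h : HasDerivAt Φ d x) :
    Tendsto (fun n : ℕ => n * (Φ (x + (n : ℝ)⁻¹) - Φ x)) atTop (𝓝 d) ∧
      Tendsto (fun n : ℕ => n * (Φ x - Φ (x - (n : ℝ)⁻¹))) atTop (𝓝 d) := by
  rw [hasDerivAt_iff_tendsto_slope_zero] at h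
  have hinv : Tendsto (fun n : ℕ => (n : ℝ)⁻¹) atTop (𝓝[>] 0) :=
    tendsto_inv_atTop_nhdsGT_zero.comp tendsto_natCast_atTop_atTop
  constructor
  · refine (h.comp (hinv.mono_right (nhdsWithin_mono _ fun t ht => ne_of_gt ht))).congr fun n => ?_
    simp
  · have hneg : Tendsto (fun n : ℕ => -(n : ℝ)⁻¹) atTop (𝓝[≠] 0) :=
      (((neg_zero (G := ℝ)) ▸ tendsto_neg_nhdsGT_neg (a := (0 : ℝ))).comp hinv).mono_right
        (nhdsWithin_mono _ fun t ht => ne_of_lt ht)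
    refine (h.comp hneg).congr fun n => ?_
    simp only [sub_eq_add_neg, smul_eq_mul, Function.comp_apply, inv_neg, inv_inv, neg_mul]
    ring

lemma Monotone.hasDerivAt_of_tendsto_nat_mul_sub {Φ : ℝ → ℝ} (hΦ : Monotone Φ) {x d : ℝ}
    (hr : Tendsto (fun n : ℕ => n * (Φ (x + (n : ℝ)⁻¹) - Φ x)) atTop (𝓝 d))
    (hl : Tendsto (fun n : ℕ => n * (Φ x - Φ (x - (n : ℝ)⁻¹))) atTop (𝓝 d)) :
    HasDerivAt Φ d x := by
  rw [hasDerivAt_iff_tendsto_slope_zero, ← nhdsLT_sup_nhdsGT, tendsto_sup]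
  constructor
  · have := (tendsto_div_nhdsGT_zero_of_monotone (D := fun t => Φ x - Φ (x - t))
      (fun s t hst => by linarith [hΦ (show x - t ≤ x - s by linarith)]) (by simp)
      hl).comp (by simpa using tendsto_neg_nhdsLT (a := (0 : ℝ)))
    refine this.congr fun t => ?_
    simp only [sub_eq_add_neg, div_eq_inv_mul, Function.comp_apply, inv_neg, neg_neg, neg_mul,
      smul_eq_mul]
    ring
  · refine (tendsto_div_nhdsGT_zero_of_monotone (D := fun t => Φ (x + t) - Φ x)
      (fun s t hst => by linarith [hΦ (show x + s ≤ x + t by linarith)]) (by simp)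
      hr).congr fun t => ?_
    simp [div_eq_inv_mul]

/-- Only the countably many rational `k` enter the hypotheses, so the conclusion holds for all `k`
outside a single null set of `y`. -/
lemma hasDerivAt_of_monotone_family {F : ℝ → ℝ → ℝ} {g : ℝ → ℝ} {y : ℝ}
    (hF : ∀ k k', k ≤ k' → Monotone (F k' - F k)) (hg : Continuous g)
    (hq : ∀ q : ℚ, HasDerivAt (F q) (g q) y) (k : ℝ) : HasDerivAt (F k) (g k) y := by
  have slope_mono {k k' : ℝ} (hk : k ≤ k') (z : ℝ) : slope (F k) y z ≤ slope (F k') y z := by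
    have := (hF k k' hk).monotoneOn univ |>.slope_nonneg (mem_univ y) (mem_univ z)
    simp only [slope_def_module, Pi.sub_apply, smul_eq_mul] at this ⊢
    rw [← sub_nonneg, ← mul_sub]
    exact this.trans_eq (by ring)
  simp only [hasDerivAt_iff_tendsto_slope] at hq ⊢
  refine tendsto_order.2 ⟨fun a ha => ?_, fun a ha => ?_⟩
  · obtain ⟨δ, hδ, hgδ⟩ := Metric.eventually_nhds_iff.1 ((hg.tendsto k).eventually (lt_mem_nhds ha))
    obtain ⟨q, hkq, hqk⟩ := exists_rat_btwn (sub_lt_self k hδ)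
    have hgq : a < g q := hgδ (by rw [Real.dist_eq, abs_lt]; constructor <;> linarith)
    filter_upwards [(hq q).eventually (lt_mem_nhds hgq)] with z hz
    exact hz.trans_le (slope_mono hqk.le z)
  · obtain ⟨δ, hδ, hgδ⟩ := Metric.eventually_nhds_iff.1 ((hg.tendsto k).eventually (gt_mem_nhds ha))
    obtain ⟨q, hkq, hqk⟩ := exists_rat_btwn (lt_add_of_pos_right k hδ)
    have hgq : g q < a := hgδ (by rw [Real.dist_eq, abs_lt]; constructor <;> linarith)
    filter_upwards [(hq q).eventually (gt_mem_nhds hgq)] with z hz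
    exact (slope_mono hkq.le z).trans_lt hz

namespace MeasureTheory.Integrable

variable {g : ℝ → ℝ}

lemma integral_Iic_eq_add_intervalIntegral (hg : Integrable g) (a : ℝ) :
    (fun x => ∫ t in Iic x, g t) = fun x => (∫ t in Iic a, g t) + ∫ t in a..x, g t := by
  ext b
  rw [← intervalIntegral.integral_Iic_sub_Iic hg.integrableOn hg.integrableOn, add_sub_cancel]

lemma ae_hasDerivAt_integral_Iic (hg : Integrable g) :
    ∀ᵐ x, HasDerivAt (fun x => ∫ t in Iic x, g t) (g x) x := by
  filter_upwards [LocallyIntegrable.ae_hasDerivAt_integral hg.locallyIntegrable] with x hx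
  rw [hg.integral_Iic_eq_add_intervalIntegral 0]
  exact (hx 0).const_add _

lemma continuous_integral_Iic (hg : Integrable g) :
    Continuous fun x => ∫ t in Iic x, g t := by
  rw [hg.integral_Iic_eq_add_intervalIntegral 0]
  exact continuous_const.add (hg.continuous_primitive 0)

lemma monotone_integral_Iic (hg : Integrable g) (hg0 : ∀ t, 0 ≤ g t) :
    Monotone fun x => ∫ t in Iic x, g t := fun _ _ hab =>
  setIntegral_mono_set hg.integrableOn (.of_forall hg0) (Iic_subset_Iic.2 hab).eventuallyLE

end MeasureTheory.Integrable

lemma measureReal_prod_sub_measureReal_prod_le {α β : Type*} [MeasurableSpace α]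
    [MeasurableSpace β] (μ : Measure (α × β)) [IsFiniteMeasure μ] {s s' : Set α} {t t' : Set β}
    (hs : MeasurableSet s) (ht : MeasurableSet t) (ht' : MeasurableSet t') (hss' : s ⊆ s')
    (htt' : t ⊆ t') :
    μ.real (s' ×ˢ t) - μ.real (s ×ˢ t) ≤ μ.real (s' ×ˢ t') - μ.real (s ×ˢ t') := by
  rw [← measureReal_sdiff (prod_mono hss' subset_rfl) (hs.prod ht),
    ← measureReal_sdiff (prod_mono hss' subset_rfl) (hs.prod ht')]
  exact measureReal_mono fun p ⟨⟨hp₁, hp₂⟩, hp⟩ => ⟨⟨hp₁, htt' hp₂⟩, fun h => hp ⟨h.1, hp₂⟩⟩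

section WithDensity

variable {α : Type*} [MeasurableSpace α] {μ : Measure α} {f : α → ℝ}

lemma integrable_of_isFiniteMeasure_withDensity_ofReal (hf : AEStronglyMeasurable f μ)
    (hnn : ∀ x, 0 ≤ f x) [IsFiniteMeasure (μ.withDensity fun x => ENNReal.ofReal (f x))] :
    Integrable f μ := by
  refine ⟨hf, ?_⟩
  rw [hasFiniteIntegral_iff_ofReal (.of_forall hnn), ← setLIntegral_univ,
    ← withDensity_apply _ .univ]
  exact measure_lt_top _ _

lemma measureReal_withDensity_ofReal (hf : AEStronglyMeasurable f μ) (hnn : ∀ x, 0 ≤ f x)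
    {s : Set α} (hs : MeasurableSet s) :
    (μ.withDensity fun x => ENNReal.ofReal (f x)).real s = ∫ x in s, f x ∂μ := by
  rw [measureReal_def, withDensity_apply _ hs,
    integral_eq_lintegral_of_nonneg_ae (.of_forall hnn) hf.restrict]

end WithDensity

lemma hasDerivAt_integral_max_sub_zero {α : Type*} [MeasurableSpace α] {μ : Measure α}
    [IsFiniteMeasure μ] {M : α → ℝ} (hM : Measurable M) (hMint : Integrable M μ) {t : ℝ}
    (hnull : μ {x | M x = t} = 0) :
    HasDerivAt (fun s => ∫ x, max (M x - s) 0 ∂μ) (-μ.real {x | t < M x}) t := by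
  have hlt : MeasurableSet {x | t < M x} := measurableSet_lt measurable_const hM
  have hdiff : ∀ᵐ x ∂μ, HasDerivAt (fun s => max (M x - s) 0)
      ({x | t < M x}.indicator (fun _ => -1) x) t := by
    filter_upwards [measure_eq_zero_iff_ae_notMem.1 hnull] with x hx
    rcases lt_or_gt_of_ne hx with hxt | hxt
    · rw [indicator_of_notMem (show x ∉ {x | t < M x} from not_lt.2 hxt.le)]
      refine (hasDerivAt_const t 0).congr_of_eventuallyEq ?_
      filter_upwards [eventually_gt_nhds hxt] with s hs
      exact max_eq_right (by linarith)
    · rw [indicator_of_mem (show x ∈ {x | t < M x} from hxt)]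
      refine ((hasDerivAt_id' t).const_sub (M x)).congr_of_eventuallyEq ?_
      filter_upwards [eventually_lt_nhds hxt] with s hs
      exact max_eq_left (by linarith)
  have hlip : ∀ x, LipschitzOnWith (Real.nnabs 1) (fun s => max (M x - s) 0) univ := fun x => by
    rw [map_one, lipschitzOnWith_univ]
    refine LipschitzWith.max_const (LipschitzWith.of_dist_le_mul fun s u => ?_) 0
    rw [Real.dist_eq, Real.dist_eq, NNReal.coe_one, one_mul, sub_sub_sub_cancel_left, abs_sub_comm]
  have := (hasDerivAt_integral_of_dominated_loc_of_lip univ_mem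
    (.of_forall fun s => ((hM.sub_const s).max measurable_const).aestronglyMeasurable)
    (hMint.sub (integrable_const t)).pos_part
    (measurable_const.indicator hlt).aestronglyMeasurable (.of_forall hlip)
    (integrable_const 1) hdiff).2
  rwa [integral_indicator_const _ hlt, smul_eq_mul, mul_neg_one] at this

lemma hasDerivAt_maxCall_diagonal {Q : Measure (ℝ × ℝ)} [IsProbabilityMeasure Q]
    (hQ : Q ≪ volume) (h₁ : Integrable Prod.fst Q) (h₂ : Integrable Prod.snd Q) (K₁ K₂ : ℝ) :
    HasDerivAt (fun t => ∫ x, max (max (x.1 - (K₁ + t)) 0) (max (x.2 - (K₂ + t)) 0) ∂Q)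
      (Q.real (Iic K₁ ×ˢ Iic K₂) - 1) 0 := by
  set M : ℝ × ℝ → ℝ := fun x => max (x.1 - K₁) (x.2 - K₂)
  have hlines : {x | M x = 0} ⊆ Prod.fst ⁻¹' {K₁} ∪ Prod.snd ⁻¹' {K₂} := fun x hx => by
    rcases max_choice (x.1 - K₁) (x.2 - K₂) with h | h <;> [left; right] <;>
      simpa [M, h, sub_eq_zero] using hx
  have hnull : Q {x | M x = 0} = 0 := measure_mono_null hlines <| hQ <| measure_union_null
    (Measure.quasiMeasurePreserving_fst.preimage_null (measure_singleton K₁))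
    (Measure.quasiMeasurePreserving_snd.preimage_null (measure_singleton K₂))
  have hcompl : {x | 0 < M x}ᶜ = Iic K₁ ×ˢ Iic K₂ := by ext x; simp [M, Prod.le_def]
  have := hasDerivAt_integral_max_sub_zero (M := M) (by fun_prop)
    ((h₁.sub (integrable_const K₁)).sup (h₂.sub (integrable_const K₂))) hnull
  rw [← hcompl, probReal_compl_eq_one_sub (measurableSet_lt measurable_const (by fun_prop))]
  convert this using 2 with t
  · congr 1 with x
    rw [max_max_max_comm, max_self, sub_add_eq_sub_sub, sub_add_eq_sub_sub, max_sub_sub_right]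
  · ring

noncomputable def primitiveFst (f : ℝ × ℝ → ℝ) (k y : ℝ) : ℝ := ∫ x in Iic k, f (x, y)

section PrimitiveFst

variable {f : ℝ × ℝ → ℝ}

lemma MeasureTheory.Integrable.integrable_primitiveFst (hf : Integrable f) (k : ℝ) :
    Integrable (primitiveFst f k) := by
  have := hf.integrableOn (s := Iic k ×ˢ univ)
  rw [IntegrableOn, Measure.volume_eq_prod, ← Measure.prod_restrict, Measure.restrict_univ] at this
  exact this.integral_prod_right

lemma Measurable.uncurry_primitiveFst (hf : Measurable f) :
    Measurable fun p : ℝ × ℝ => primitiveFst f p.1 p.2 := by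
  have hS : MeasurableSet {q : (ℝ × ℝ) × ℝ | q.2 ≤ q.1.1} :=
    measurableSet_le measurable_snd measurable_fst.fst
  have hF : StronglyMeasurable fun q : (ℝ × ℝ) × ℝ =>
      {q : (ℝ × ℝ) × ℝ | q.2 ≤ q.1.1}.indicator (fun q => f (q.2, q.1.2)) q :=
    ((hf.comp (measurable_snd.prodMk measurable_fst.snd)).indicator hS).stronglyMeasurable
  convert (hF.integral_prod_right' (ν := volume)).measurable using 2 with p
  rw [primitiveFst, ← integral_indicator measurableSet_Iic]
  rfl

/-- The one-sided difference quotients along `n⁻¹` make the good set measurable, which is what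
Fubini needs to pass from almost every slice to almost every point. -/
lemma ae_hasDerivAt_primitiveFst (hmeas : Measurable f) (hnn : ∀ x, 0 ≤ f x)
    (hf : Integrable f) :
    ∀ᵐ K : ℝ × ℝ, HasDerivAt (fun k => primitiveFst f k K.2) (f K) K.1 := by
  have hf' : Integrable f ((volume : Measure ℝ).prod volume) := hf
  set S := {K : ℝ × ℝ |
    Tendsto (fun n : ℕ => n * (primitiveFst f (K.1 + (n : ℝ)⁻¹) K.2 - primitiveFst f K.1 K.2))
      atTop (𝓝 (f K)) ∧
    Tendsto (fun n : ℕ => n * (primitiveFst f K.1 K.2 - primitiveFst f (K.1 - (n : ℝ)⁻¹) K.2))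
      atTop (𝓝 (f K))}
  have hS : MeasurableSet S := by
    have hG := hmeas.uncurry_primitiveFst
    refine (measurableSet_tendsto_fun (fun n => ?_) hmeas).inter
      (measurableSet_tendsto_fun (fun n => ?_) hmeas) <;> refine measurable_const.mul (.sub ?_ ?_)
    all_goals fun_prop
  have hslices : ∀ᵐ y : ℝ, ∀ᵐ x : ℝ, (x, y) ∈ S := by
    filter_upwards [hf'.prod_left_ae] with y hy
    filter_upwards [hy.ae_hasDerivAt_integral_Iic] with x hx
    exact hx.tendsto_nat_mul_sub
  have hS_ae : ∀ᵐ K : ℝ × ℝ, K ∈ S :=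
    (Measure.ae_prod_mem_iff_ae_ae_mem hS).2 ((Measure.ae_ae_comm hS).2 hslices)
  filter_upwards [hS_ae, Measure.quasiMeasurePreserving_snd.ae hf'.prod_left_ae] with K hK hK₂
  exact (hK₂.monotone_integral_Iic fun x => hnn _).hasDerivAt_of_tendsto_nat_mul_sub hK.1 hK.2

lemma measureReal_withDensity_Iic_prod_Iic (hmeas : Measurable f) (hnn : ∀ x, 0 ≤ f x)
    (hf : Integrable f) (k₁ k₂ : ℝ) :
    (volume.withDensity fun x => ENNReal.ofReal (f x)).real (Iic k₁ ×ˢ Iic k₂) =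
      ∫ y in Iic k₂, primitiveFst f k₁ y := by
  rw [measureReal_withDensity_ofReal hmeas.aestronglyMeasurable hnn
    (measurableSet_Iic.prod measurableSet_Iic), Measure.volume_eq_prod, ← Measure.prod_restrict,
    integral_prod_symm]
  · rfl
  · rw [Measure.prod_restrict, ← Measure.volume_eq_prod]
    exact hf.integrableOn

end PrimitiveFst

/-- main theorem, n = 2: if the law Q of the integrable asset
vector (X₁,X₂) ∈ ℝ₊² has density f w.r.t. Lebesgue measure, and
V^∞(K₁,K₂) = E[max((X₁-K₁)⁺,(X₂-K₂)⁺)], then for m-a.e. (K₁,K₂) the mixed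
strike partials of the directional derivative D_𝟙 V^∞ (direction (1,1),
realized as t ↦ V^∞(K₁+t,K₂+t) differentiated at t = 0) exist and recover the
density: ∂²/∂K₁∂K₂ [D_𝟙 V^∞](K₁,K₂) = f(K₁,K₂). -/
theorem stmt16 (f : ℝ × ℝ → ℝ) (hmeas : Measurable f) (hnn : ∀ x, 0 ≤ f x)
    (Q : Measure (ℝ × ℝ)) [IsProbabilityMeasure Q]
    (hdens : Q = MeasureTheory.volume.withDensity fun x => ENNReal.ofReal (f x))
    (hsupp : ∀ᵐ x ∂Q, 0 ≤ x.1 ∧ 0 ≤ x.2)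
    (hint : Integrable (fun x : ℝ × ℝ => x.1 + x.2) Q) :
    let V : ℝ → ℝ → ℝ := fun K₁ K₂ =>
      ∫ x, max (max (x.1 - K₁) 0) (max (x.2 - K₂) 0) ∂Q
    let DV : ℝ → ℝ → ℝ := fun K₁ K₂ =>
      deriv (fun t => V (K₁ + t) (K₂ + t)) 0
    ∀ᵐ K : ℝ × ℝ, (0 ≤ K.1 ∧ 0 ≤ K.2) →
      (DifferentiableAt ℝ (fun k₂ => DV K.1 k₂) K.2 ∧
       HasDerivAt (fun k₁ => deriv (fun k₂ => DV k₁ k₂) K.2) (f K) K.1) := by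
  intro V DV
  have h₁ : Integrable Prod.fst Q := hint.mono' measurable_fst.aestronglyMeasurable <| by
    filter_upwards [hsupp] with x hx
    rw [Real.norm_eq_abs, abs_of_nonneg hx.1]
    linarith
  have h₂ : Integrable Prod.snd Q := hint.mono' measurable_snd.aestronglyMeasurable <| by
    filter_upwards [hsupp] with x hx
    rw [Real.norm_eq_abs, abs_of_nonneg hx.2]
    linarith
  have hDV (k₁ k₂ : ℝ) : DV k₁ k₂ = Q.real (Iic k₁ ×ˢ Iic k₂) - 1 :=
    (hasDerivAt_maxCall_diagonal (hdens ▸ withDensity_absolutelyContinuous _ _) h₁ h₂ k₁ k₂).deriv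
  have : IsFiniteMeasure (volume.withDensity fun x => ENNReal.ofReal (f x)) := hdens ▸ inferInstance
  have hf : Integrable f :=
    integrable_of_isFiniteMeasure_withDensity_ofReal hmeas.aestronglyMeasurable hnn
  have hrat : ∀ᵐ y, ∀ q : ℚ,
      HasDerivAt (fun k₂ => Q.real (Iic (q : ℝ) ×ˢ Iic k₂)) (primitiveFst f q y) y := by
    refine ae_all_iff.2 fun q => ?_
    simpa only [hdens, measureReal_withDensity_Iic_prod_Iic hmeas hnn hf] using
      (hf.integrable_primitiveFst q).ae_hasDerivAt_integral_Iic
  have hslices : ∀ᵐ y, Integrable fun x => f (x, y) :=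
    Integrable.prod_left_ae (μ := volume) (ν := volume) hf
  filter_upwards [Measure.quasiMeasurePreserving_snd.ae (hslices.and hrat),
    ae_hasDerivAt_primitiveFst hmeas hnn hf] with K ⟨hslice, hratK⟩ hK₁ _
  have hK₂ (k : ℝ) : HasDerivAt (fun k₂ => DV k k₂) (primitiveFst f k K.2) K.2 := by
    simp only [hDV]
    refine (hasDerivAt_of_monotone_family (F := fun k k₂ => Q.real (Iic k ×ˢ Iic k₂))
      (fun k k' hk y y' hy => ?_) hslice.continuous_integral_Iic hratK k).sub_const 1
    exact measureReal_prod_sub_measureReal_prod_le Q measurableSet_Iic measurableSet_Iic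
      measurableSet_Iic (Iic_subset_Iic.2 hk) (Iic_subset_Iic.2 hy)
  exact ⟨(hK₂ K.1).differentiableAt, by simpa only [fun k => (hK₂ k).deriv] using hK₁⟩
end
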